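/- Let p > r ≥ 0 and β_p = β_r · (F^{⊗(p−r)} ⊗ I_{2^r}) over GF(2), where β_r is the concatenation of blocks β^{(1)},…,β^{(2^{p−r})} of length 2^r. Then for each k ∈ {1,…,2^r}, the XOR of β_p[(2j−1)·2^r + k] over j = 1,…,2^{p−r−1} equals β^{(2)}[k], the k-th bit of the second block of β_r. -/
import Mathlib


open Matrix Kronecker Finset

/-- The polar code base (polarizing) matrix `F = [[1,0],[1,1]]` over `GF(2)`. -/
def polarF : Matrix (Fin 2) (Fin 2) (ZMod 2) := !![1, 0; 1, 1]

/-- The `m`-fold Kronecker power `F^{⊗ m}`, with indices identified with `Fin (2^m)`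
(first Kronecker factor = most significant bit, as usual). -/
def kronPowF : (m : ℕ) → Matrix (Fin (2 ^ m)) (Fin (2 ^ m)) (ZMod 2)
  | 0 => 1
  | m + 1 =>
      Matrix.reindex (finProdFinEquiv.trans (finCongr (pow_succ 2 m).symm))
        (finProdFinEquiv.trans (finCongr (pow_succ 2 m).symm)) (kronPowF m ⊗ₖ polarF)

/-- For `q ≤ p`, the identification of a block index `j ∈ Fin (2^(p-q))` together with a
within-block position `k ∈ Fin (2^q)` with the coordinate `j * 2^q + k` of a length-`2^p`
vector (`0`-based; this is position `(j-1)·2^q + k` in the `1`-based notation of the paper). -/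
def segEquiv (p q : ℕ) (h : q ≤ p) : Fin (2 ^ (p - q)) × Fin (2 ^ q) ≃ Fin (2 ^ p) :=
  finProdFinEquiv.trans (finCongr (by rw [← pow_add, Nat.sub_add_cancel h]))

/-- The encoding matrix `F^{⊗(p-q)} ⊗ I_{2^q}`, acting on `GF(2)^{2^p}`. -/
def encMat (p q : ℕ) (h : q ≤ p) : Matrix (Fin (2 ^ p)) (Fin (2 ^ p)) (ZMod 2) :=
  Matrix.reindex (segEquiv p q h) (segEquiv p q h)
    (kronPowF (p - q) ⊗ₖ (1 : Matrix (Fin (2 ^ q)) (Fin (2 ^ q)) (ZMod 2)))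

/-- For `1 ≤ m`, the (`0`-based) block index `2*j + 1 ∈ Fin (2^m)` of an odd-indexed segment. -/
def oddBlock (m : ℕ) (hm : 1 ≤ m) (j : Fin (2 ^ (m - 1))) : Fin (2 ^ m) :=
  ⟨2 * (j : ℕ) + 1, by
    have h2 : 2 ^ (m - 1) * 2 = 2 ^ m := by rw [← pow_succ]; congr 1; omega
    have := j.isLt; omega⟩

lemma rowSum_polarF (a : Fin 2) : ∑ b, polarF a b = if (a : ℕ) = 0 then 1 else 0 := by
  fin_cases a <;> simp [polarF, Fin.sum_univ_two] <;> decide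

lemma symmE_fst (m : ℕ) (i : Fin (2 ^ (m + 1))) :
    ((((finProdFinEquiv.trans (finCongr (pow_succ 2 m).symm)) :
        Fin (2 ^ m) × Fin 2 ≃ Fin (2 ^ (m + 1))).symm i).1 : ℕ) = (i : ℕ) / 2 := rfl

lemma symmE_snd (m : ℕ) (i : Fin (2 ^ (m + 1))) :
    ((((finProdFinEquiv.trans (finCongr (pow_succ 2 m).symm)) :
        Fin (2 ^ m) × Fin 2 ≃ Fin (2 ^ (m + 1))).symm i).2 : ℕ) = (i : ℕ) % 2 := rfl

lemma rowSum_kronPowF : ∀ (m : ℕ) (i : Fin (2 ^ m)),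
    ∑ j, kronPowF m i j = if (i : ℕ) = 0 then 1 else 0 := by
  intro m
  induction m with
  | zero => intro i; fin_cases i; simp [kronPowF, Matrix.one_apply]
  | succ m ih =>
    intro i
    set e : Fin (2 ^ m) × Fin 2 ≃ Fin (2 ^ (m + 1)) :=
      finProdFinEquiv.trans (finCongr (pow_succ 2 m).symm) with he
    have : ∑ j, kronPowF (m + 1) i j
        = ∑ q : Fin (2 ^ m) × Fin 2, kronPowF (m + 1) i (e q) :=
      (Equiv.sum_comp e _).symm
    rw [this]
    have entry : ∀ q : Fin (2 ^ m) × Fin 2,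
        kronPowF (m + 1) i (e q)
          = kronPowF m (e.symm i).1 q.1 * polarF (e.symm i).2 q.2 := by
      intro q
      show (Matrix.reindex e e (kronPowF m ⊗ₖ polarF)) i (e q) = _
      simp [Matrix.reindex_apply, Matrix.submatrix_apply, Equiv.symm_apply_apply,
        Matrix.kroneckerMap_apply]
    simp only [entry]
    rw [Fintype.sum_prod_type, ← Finset.sum_mul_sum, ih, rowSum_polarF]
    have h1 := symmE_fst m i
    have h2 := symmE_snd m i
    rw [← he] at h1 h2
    rw [h1, h2]
    have hiff : (i : ℕ) = 0 ↔ (i : ℕ) / 2 = 0 ∧ (i : ℕ) % 2 = 0 := by omega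
    split_ifs with ha hb hc hd he' hf <;> simp_all

lemma oddSum_kronPowF (m : ℕ) (hm : 1 ≤ m) (a : Fin (2 ^ m)) :
    ∑ j : Fin (2 ^ (m - 1)), kronPowF m a (oddBlock m hm j)
      = if (a : ℕ) = 1 then 1 else 0 := by
  obtain ⟨m', rfl⟩ : ∃ m', m = m' + 1 := ⟨m - 1, by omega⟩
  show ∑ j : Fin (2 ^ m'), kronPowF (m' + 1) a (oddBlock (m' + 1) hm j)
      = if (a : ℕ) = 1 then 1 else 0
  set e : Fin (2 ^ m') × Fin 2 ≃ Fin (2 ^ (m' + 1)) :=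
    finProdFinEquiv.trans (finCongr (pow_succ 2 m').symm) with he
  have entry : ∀ j : Fin (2 ^ m'),
      kronPowF (m' + 1) a (oddBlock (m' + 1) hm j)
        = kronPowF m' (e.symm a).1 j * polarF (e.symm a).2 1 := by
    intro j
    have hb : oddBlock (m' + 1) hm j = e (j, 1) := by
      apply Fin.ext
      have hval : ((e (j, 1)) : ℕ) = 1 + 2 * (j : ℕ) := rfl
      simp only [oddBlock, hval]
      omega
    rw [hb]
    show (Matrix.reindex e e (kronPowF m' ⊗ₖ polarF)) a (e (j, 1)) = _
    simp [Matrix.reindex_apply, Matrix.submatrix_apply, Equiv.symm_apply_apply,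
      Matrix.kroneckerMap_apply]
  simp only [entry]
  rw [← Finset.sum_mul, rowSum_kronPowF]
  have h1 := symmE_fst m' a
  have h2 := symmE_snd m' a
  rw [← he] at h1 h2
  have hpol : polarF (e.symm a).2 1 = if ((e.symm a).2 : ℕ) = 1 then 1 else 0 := by
    generalize (e.symm a).2 = b
    fin_cases b <;> simp [polarF]
  rw [hpol, h1, h2]
  have hiff : (a : ℕ) = 1 ↔ (a : ℕ) / 2 = 0 ∧ (a : ℕ) % 2 = 1 := by omega
  split_ifs with ha hb hc hd he' hf <;> simp_all

/-- **eq. (A.5).** Let `p > r ≥ 0` and `β_p = β_r · (F^{⊗(p−r)} ⊗ I_{2^r})`,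
where `β_r ∈ GF(2)^{2^p}` is a concatenation of blocks of length `2^r`. Then for each
`k ∈ Fin (2^r)`, the XOR of `β_p[(2j−1)·2^r + k]` over `j = 1, …, 2^{p−r−1}` equals the `k`-th
bit of the second block of `β_r`. -/
theorem odd_segments_xor_eq_second_block (p r : ℕ) (hpr : r < p)
    (βr : Fin (2 ^ p) → ZMod 2) (βp : Fin (2 ^ p) → ZMod 2)
    (hβp : βp = βr ᵥ* encMat p r hpr.le) (k : Fin (2 ^ r)) :
    ∑ j : Fin (2 ^ (p - r - 1)), βp (segEquiv p r hpr.le (oddBlock (p - r) (by omega) j, k)) =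
      βr (segEquiv p r hpr.le (⟨1, Nat.one_lt_two_pow_iff.mpr (by omega)⟩, k)) := by
  subst hβp
  have key : ∀ b : Fin (2 ^ (p - r)),
      (βr ᵥ* encMat p r hpr.le) (segEquiv p r hpr.le (b, k))
        = ∑ a : Fin (2 ^ (p - r)), βr (segEquiv p r hpr.le (a, k)) * kronPowF (p - r) a b := by
    intro b
    have : (βr ᵥ* encMat p r hpr.le) (segEquiv p r hpr.le (b, k))
        = ∑ x, βr x * encMat p r hpr.le x (segEquiv p r hpr.le (b, k)) := by
      simp [Matrix.vecMul, dotProduct]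
    rw [this, ← Equiv.sum_comp (segEquiv p r hpr.le)
      (fun x => βr x * encMat p r hpr.le x (segEquiv p r hpr.le (b, k)))]
    have entry : ∀ q : Fin (2 ^ (p - r)) × Fin (2 ^ r),
        encMat p r hpr.le (segEquiv p r hpr.le q) (segEquiv p r hpr.le (b, k))
          = kronPowF (p - r) q.1 b * (if q.2 = k then 1 else 0) := by
      intro q
      show (Matrix.reindex (segEquiv p r hpr.le) (segEquiv p r hpr.le)
        (kronPowF (p - r) ⊗ₖ 1)) _ _ = _
      simp [Matrix.reindex_apply, Matrix.submatrix_apply, Equiv.symm_apply_apply,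
        Matrix.kroneckerMap_apply, Matrix.one_apply]
    simp only [entry]
    rw [Fintype.sum_prod_type]
    congr 1
    ext a
    rw [Finset.sum_eq_single k]
    · simp
    · intro c _ hck; simp [hck]
    · intro h; exact absurd (Finset.mem_univ k) h
  simp only [key]
  rw [Finset.sum_comm]
  have hm1 : 1 ≤ p - r := by omega
  have inner : ∀ a : Fin (2 ^ (p - r)),
      ∑ j : Fin (2 ^ (p - r - 1)),
          βr (segEquiv p r hpr.le (a, k)) * kronPowF (p - r) a (oddBlock (p - r) (by omega) j)
        = βr (segEquiv p r hpr.le (a, k)) * (if (a : ℕ) = 1 then 1 else 0) := by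
    intro a
    rw [← Finset.mul_sum, oddSum_kronPowF (p - r) hm1 a]
  simp only [inner]
  rw [Finset.sum_eq_single (⟨1, Nat.one_lt_two_pow_iff.mpr (by omega)⟩ : Fin (2 ^ (p - r)))]
  · simp
  · intro a _ ha
    have : (a : ℕ) ≠ 1 := fun h => ha (Fin.ext h)
    simp [this]
  · intro h; exact absurd (Finset.mem_univ _) h
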